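/- Let α > 0, λ > 0 and t ≥ 0. Then (1/Γ(α)) ∫₀ᵗ (t−τ)^{α−1} E_{α,1}(−λ τ^α) dτ = λ^{−1}(1 − E_{α,1}(−λ t^α)); that is, I^α applied to τ ↦ E_{α,1}(−λ τ^α) equals λ^{−1}(1 − E_{α,1}(−λ t^α)). -/

import Mathlib

/-!
Expanding `E_{α,β}(z τ^α)` as a power series in `τ^α`, every term is a power of `τ`, and `I^α`
maps `τ^(p-1)` to `Γ(p) / Γ(p + α) · t^(p+α-1)` (a Beta integral). Integrating term by term, which
is legitimate because the integrals of the absolute values again form a Mittag-Leffler series,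
gives `I^α [τ^(β-1) E_{α,β}(z τ^α)] (t) = t^(α+β-1) E_{α,α+β}(z t^α)`. For `β = 1`, `z = -λ` the
shift identity `E_{α,1}(w) = 1 + w E_{α,α+1}(w)` turns the right-hand side into
`λ⁻¹ (1 - E_{α,1}(-λ t^α))`. The Mittag-Leffler series converge by the ratio test, since
log-convexity of `Γ` gives `Γ(y) (y - 1)^a ≤ Γ(y + a)`.
-/

open Real MeasureTheory Filter Set

/-- The Mittag-Leffler function `E_{α,β}(z) = ∑_{k=0}^∞ z^k / Γ(αk+β)`.
(In Lean, `Real.Gamma` vanishes at the poles of `Γ`, and division by zero is zero,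
so the summand is interpreted as `0` there.) -/
noncomputable def mittagLeffler (α β z : ℝ) : ℝ :=
  ∑' k : ℕ, z ^ k / Real.Gamma (α * k + β)

theorem Real.Gamma_mul_sub_one_rpow_le_Gamma_add {y a : ℝ} (hy : 1 < y) (ha : 0 < a) :
    Gamma y * (y - 1) ^ a ≤ Gamma (y + a) := by
  have hy₁ : 0 < y - 1 := by linarith
  have hya : 0 < y + a := by linarith
  -- log-convexity: the slope of `log ∘ Gamma` on `[y - 1, y]`, which is `log (y - 1)`,
  -- is at most its slope on `[y, y + a]`
  have hslope := (convexOn_iff_slope_mono_adjacent.mp convexOn_log_Gamma).2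
    (mem_Ioi.mpr hy₁) (mem_Ioi.mpr hya) (by linarith : y - 1 < y) (by linarith : y < y + a)
  have hrec : Gamma y = (y - 1) * Gamma (y - 1) := by
    simpa using Gamma_add_one hy₁.ne'
  have hΓ₁ := Gamma_pos_of_pos hy₁
  simp only [Function.comp, hrec, log_mul hy₁.ne' hΓ₁.ne', sub_sub_cancel, div_one,
    add_sub_cancel_left, le_div_iff₀ ha] at hslope
  rw [← log_le_log_iff (by positivity) (Gamma_pos_of_pos hya), hrec,
    log_mul (by positivity) (by positivity), log_mul hy₁.ne' hΓ₁.ne', log_rpow hy₁]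
  linarith

theorem summable_mittagLeffler {α : ℝ} (hα : 0 < α) (β z : ℝ) :
    Summable fun k : ℕ => z ^ k / Gamma (α * k + β) := by
  refine summable_of_ratio_norm_eventually_le (r := 1 / 2) (by norm_num) ?_
  have hlin : Tendsto (fun k : ℕ => α * k + β) atTop atTop :=
    tendsto_atTop_add_const_right _ β (tendsto_natCast_atTop_atTop.const_mul_atTop hα)
  have hpow : Tendsto (fun k : ℕ => (α * k + β - 1) ^ α) atTop atTop :=
    (tendsto_rpow_atTop hα).comp (tendsto_atTop_add_const_right _ (-1) hlin)
  filter_upwards [hlin.eventually_gt_atTop 1, hpow.eventually_ge_atTop (2 * |z|)] with k hk hk'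
  have hΓ : 0 < Gamma (α * k + β) := Gamma_pos_of_pos (by linarith)
  have hΓα : Gamma (α * k + β) * (2 * |z|) ≤ Gamma (α * k + β + α) :=
    (mul_le_mul_of_nonneg_left hk' hΓ.le).trans (Gamma_mul_sub_one_rpow_le_Gamma_add hk hα)
  have hΓ' : 0 < Gamma (α * k + β + α) := Gamma_pos_of_pos (by linarith)
  rw [Nat.cast_succ, mul_add_one, add_right_comm, norm_div, norm_div, norm_pow, norm_pow,
    norm_of_nonneg hΓ.le, norm_of_nonneg hΓ'.le, norm_eq_abs, pow_succ, div_le_iff₀ hΓ']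
  calc |z| ^ k * |z|
      = 1 / 2 * (|z| ^ k / Gamma (α * k + β)) * (Gamma (α * k + β) * (2 * |z|)) := by field_simp
    _ ≤ _ := by gcongr

theorem mittagLeffler_eq_inv_Gamma_add_mul {α : ℝ} (hα : 0 < α) (β z : ℝ) :
    mittagLeffler α β z = (Gamma β)⁻¹ + z * mittagLeffler α (α + β) z := by
  rw [mittagLeffler, (summable_mittagLeffler hα β z).tsum_eq_zero_add, mittagLeffler,
    ← tsum_mul_left]
  congr 1
  · simp
  · refine tsum_congr fun k => ?_
    rw [pow_succ', Nat.cast_succ, mul_div_assoc, mul_add_one, add_right_comm, add_assoc,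
      add_comm β α]

theorem intervalIntegrable_rpow_mul_rpow_sub {p q t : ℝ} (hp : 0 < p) (hq : 0 < q) (ht : 0 < t) :
    IntervalIntegrable (fun τ => τ ^ (p - 1) * (t - τ) ^ (q - 1)) volume 0 t := by
  -- each factor is singular at one end only: split at `t / 2`
  have hleft : ContinuousOn (fun τ => (t - τ) ^ (q - 1)) (uIcc 0 (t / 2)) := by
    refine (continuousOn_const.sub continuousOn_id).rpow_const fun τ hτ => Or.inl ?_
    rw [uIcc_of_le (by linarith)] at hτ
    simp only [Pi.sub_apply, id]
    linarith [hτ.2]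
  have hright : ContinuousOn (fun τ : ℝ => τ ^ (p - 1)) (uIcc (t / 2) t) := by
    refine continuousOn_id.rpow_const fun τ hτ => Or.inl ?_
    rw [uIcc_of_le (by linarith)] at hτ
    exact (show (0:ℝ) < τ by linarith [hτ.1]).ne'
  have hsing : IntervalIntegrable (fun τ => (t - τ) ^ (q - 1)) volume (t / 2) t := by
    simpa using (intervalIntegral.intervalIntegrable_rpow' (r := q - 1) (a := t - t / 2)
      (b := t - t) (by linarith)).comp_sub_left t
  exact ((intervalIntegral.intervalIntegrable_rpow' (by linarith)).mul_continuousOn hleft).trans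
    (hsing.continuousOn_mul hright)

theorem integral_rpow_mul_rpow_sub {p q t : ℝ} (hp : 0 < p) (hq : 0 < q) (ht : 0 < t) :
    ∫ τ in (0:ℝ)..t, τ ^ (p - 1) * (t - τ) ^ (q - 1)
      = Gamma p * Gamma q / Gamma (p + q) * t ^ (p + q - 1) := by
  have hB : Complex.betaIntegral p q = ((Gamma p * Gamma q / Gamma (p + q) : ℝ) : ℂ) := by
    have hβ := Complex.Gamma_mul_Gamma_eq_betaIntegral (s := p) (t := q) (by simpa) (by simpa)
    have hΓ : (Gamma (p + q) : ℂ) ≠ 0 := by exact_mod_cast (Gamma_pos_of_pos (add_pos hp hq)).ne'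
    rw [← Complex.ofReal_add, Complex.Gamma_ofReal, Complex.Gamma_ofReal,
      Complex.Gamma_ofReal] at hβ
    push_cast
    rw [hβ, mul_div_cancel_left₀ _ hΓ]
  apply Complex.ofReal_injective
  rw [← intervalIntegral.integral_ofReal, Complex.ofReal_mul, Complex.ofReal_cpow ht.le, mul_comm,
    ← hB, Complex.ofReal_sub, Complex.ofReal_add, Complex.ofReal_one,
    ← Complex.betaIntegral_scaled p q ht]
  refine intervalIntegral.integral_congr fun τ hτ => ?_
  rw [uIcc_of_le ht.le] at hτ
  push_cast [Complex.ofReal_cpow hτ.1, Complex.ofReal_cpow (sub_nonneg.mpr hτ.2)]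
  rfl

noncomputable def riemannLiouvilleIntegral (α : ℝ) (f : ℝ → ℝ) (t : ℝ) : ℝ :=
  (1 / Gamma α) * ∫ τ in (0:ℝ)..t, (t - τ) ^ (α - 1) * f τ

section RiemannLiouville

variable {α t : ℝ}

theorem riemannLiouvilleIntegral_congr (ht : 0 ≤ t) {f g : ℝ → ℝ} (h : EqOn f g (Ioc 0 t)) :
    riemannLiouvilleIntegral α f t = riemannLiouvilleIntegral α g t := by
  simp only [riemannLiouvilleIntegral, intervalIntegral.integral_of_le ht]
  congr 1
  exact setIntegral_congr_fun measurableSet_Ioc fun τ hτ => by rw [h hτ]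

theorem riemannLiouvilleIntegral_const_mul (c : ℝ) (f : ℝ → ℝ) :
    riemannLiouvilleIntegral α (fun τ => c * f τ) t = c * riemannLiouvilleIntegral α f t := by
  simp only [riemannLiouvilleIntegral, mul_left_comm _ c, intervalIntegral.integral_const_mul]

theorem riemannLiouvilleIntegral_rpow (hα : 0 < α) {p : ℝ} (hp : 0 < p) (ht : 0 < t) :
    riemannLiouvilleIntegral α (fun τ => τ ^ (p - 1)) t
      = Gamma p / Gamma (p + α) * t ^ (p + α - 1) := by
  simp only [riemannLiouvilleIntegral, fun τ : ℝ => mul_comm ((t - τ) ^ (α - 1)) (τ ^ (p - 1)),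
    integral_rpow_mul_rpow_sub hp hα ht]
  field_simp [(Gamma_pos_of_pos hα).ne']

theorem riemannLiouvilleIntegral_tsum (ht : 0 ≤ t) {f : ℕ → ℝ → ℝ}
    (hint : ∀ k, IntegrableOn (fun τ => (t - τ) ^ (α - 1) * f k τ) (Ioc 0 t))
    (hsum : Summable fun k => ∫ τ in Ioc 0 t, ‖(t - τ) ^ (α - 1) * f k τ‖) :
    riemannLiouvilleIntegral α (fun τ => ∑' k, f k τ) t
      = ∑' k, riemannLiouvilleIntegral α (f k) t := by
  simp only [riemannLiouvilleIntegral, intervalIntegral.integral_of_le ht, tsum_mul_left]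
  rw [integral_tsum_of_summable_integral_norm hint hsum]
  simp only [tsum_mul_left]

end RiemannLiouville

theorem rpow_mul_mittagLeffler_term {τ : ℝ} (hτ : 0 < τ) (α β z : ℝ) (k : ℕ) :
    τ ^ (β - 1) * ((z * τ ^ α) ^ k / Gamma (α * k + β))
      = z ^ k / Gamma (α * k + β) * τ ^ (α * k + β - 1) := by
  rw [mul_pow, ← rpow_natCast (τ ^ α), ← rpow_mul hτ.le, add_sub_assoc, rpow_add hτ]
  ring

section MittagLeffler

variable {α β : ℝ}

theorem riemannLiouvilleIntegral_mittagLeffler_term (hα : 0 < α) (hβ : 0 < β) (z : ℝ) (k : ℕ)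
    {t : ℝ} (ht : 0 < t) :
    riemannLiouvilleIntegral α (fun τ => τ ^ (β - 1) * ((z * τ ^ α) ^ k / Gamma (α * k + β))) t
      = t ^ (α + β - 1) * ((z * t ^ α) ^ k / Gamma (α * k + (α + β))) := by
  have hp : 0 < α * k + β := by positivity
  rw [riemannLiouvilleIntegral_congr ht.le fun τ hτ => rpow_mul_mittagLeffler_term hτ.1 α β z k,
    riemannLiouvilleIntegral_const_mul, riemannLiouvilleIntegral_rpow hα hp ht,
    add_assoc _ β α, add_comm β α, add_sub_assoc, rpow_add ht, mul_pow,
    ← rpow_natCast (t ^ α), ← rpow_mul ht.le]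
  field_simp [(Gamma_pos_of_pos hp).ne']

theorem norm_sub_rpow_mul_mittagLeffler_term (hα : 0 ≤ α) (hβ : 0 < β) (z : ℝ) (k : ℕ)
    {t τ : ℝ} (hτ : τ ∈ Ioc 0 t) :
    ‖(t - τ) ^ (α - 1) * (τ ^ (β - 1) * ((z * τ ^ α) ^ k / Gamma (α * k + β)))‖
      = (t - τ) ^ (α - 1) * (τ ^ (β - 1) * ((|z| * τ ^ α) ^ k / Gamma (α * k + β))) := by
  have hΓ : 0 < Gamma (α * k + β) := Gamma_pos_of_pos (by positivity)
  rw [norm_mul, norm_mul, norm_div, norm_pow, norm_mul, norm_of_nonneg hΓ.le,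
    norm_of_nonneg (rpow_nonneg (sub_nonneg.mpr hτ.2) _), norm_of_nonneg (rpow_nonneg hτ.1.le _),
    norm_of_nonneg (rpow_nonneg hτ.1.le _), norm_eq_abs]

theorem riemannLiouvilleIntegral_mittagLeffler (hα : 0 < α) (hβ : 0 < β) (z : ℝ) {t : ℝ}
    (ht : 0 < t) :
    riemannLiouvilleIntegral α (fun τ => τ ^ (β - 1) * mittagLeffler α β (z * τ ^ α)) t
      = t ^ (α + β - 1) * mittagLeffler α (α + β) (z * t ^ α) := by
  set f : ℝ → ℕ → ℝ → ℝ := fun z k τ => τ ^ (β - 1) * ((z * τ ^ α) ^ k / Gamma (α * k + β))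
  have hint : ∀ k, IntegrableOn (fun τ => (t - τ) ^ (α - 1) * f z k τ) (Ioc 0 t) := by
    intro k
    have hp : 0 < α * k + β := by positivity
    refine IntegrableOn.congr_fun (((intervalIntegrable_iff_integrableOn_Ioc_of_le ht.le).mp
      (intervalIntegrable_rpow_mul_rpow_sub hp hα ht)).const_mul (z ^ k / Gamma (α * k + β)))
        (fun τ hτ => ?_) measurableSet_Ioc
    simp only [f, rpow_mul_mittagLeffler_term hτ.1]
    ring
  have hnorm : ∀ k, ∫ τ in Ioc 0 t, ‖(t - τ) ^ (α - 1) * f z k τ‖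
      = Gamma α * riemannLiouvilleIntegral α (f |z| k) t := by
    intro k
    rw [riemannLiouvilleIntegral, ← mul_assoc, mul_one_div_cancel (Gamma_pos_of_pos hα).ne',
      one_mul, intervalIntegral.integral_of_le ht.le]
    exact setIntegral_congr_fun measurableSet_Ioc fun τ hτ =>
      norm_sub_rpow_mul_mittagLeffler_term hα.le hβ z k hτ
  have hsum : Summable fun k => ∫ τ in Ioc 0 t, ‖(t - τ) ^ (α - 1) * f z k τ‖ := by
    simp only [hnorm, f, riemannLiouvilleIntegral_mittagLeffler_term hα hβ _ _ ht]
    exact ((summable_mittagLeffler hα (α + β) _).mul_left _).mul_left _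
  have hseries :
      (fun τ => τ ^ (β - 1) * mittagLeffler α β (z * τ ^ α)) = fun τ => ∑' k, f z k τ := by
    ext τ
    simp only [mittagLeffler, f, tsum_mul_left]
  rw [hseries, riemannLiouvilleIntegral_tsum ht.le hint hsum]
  simp only [f, riemannLiouvilleIntegral_mittagLeffler_term hα hβ _ _ ht, tsum_mul_left,
    mittagLeffler]

end MittagLeffler

/-- For `α > 0`, `λ > 0` and `t ≥ 0`,
`(1/Γ(α)) ∫₀ᵗ (t−τ)^{α−1} E_{α,1}(−λ τ^α) dτ = λ⁻¹ (1 − E_{α,1}(−λ t^α))`. -/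
theorem RL_integral_mittagLeffler_one (α lam t : ℝ) (hα : 0 < α) (hlam : 0 < lam)
    (ht : 0 ≤ t) :
    (1 / Real.Gamma α) * ∫ τ in (0:ℝ)..t, (t - τ) ^ (α - 1) * mittagLeffler α 1 (-(lam * τ ^ α))
      = lam⁻¹ * (1 - mittagLeffler α 1 (-(lam * t ^ α))) := by
  have hE := mittagLeffler_eq_inv_Gamma_add_mul hα 1 (-(lam * t ^ α))
  rw [Gamma_one, inv_one] at hE
  rcases ht.eq_or_lt with rfl | ht
  · simp only [zero_rpow hα.ne', mul_zero, neg_zero, zero_mul, add_zero] at hE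
    rw [intervalIntegral.integral_same, mul_zero, zero_rpow hα.ne', mul_zero, neg_zero, hE,
      sub_self, mul_zero]
  have hRL := riemannLiouvilleIntegral_mittagLeffler hα one_pos (-lam) ht
  simp only [sub_self, rpow_zero, one_mul, add_sub_cancel_right, neg_mul] at hRL
  change riemannLiouvilleIntegral α _ t = _
  rw [hRL, hE]
  field_simp [hlam.ne']
  ring
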